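/- arXiv:2108.08465 — 2 statements merged into one kernel-verified Lean document; each statement's English description precedes it below -/
import Mathlib

section
/- If there exist two distinct individuals i, j ∈ N, a Pareto efficient allocation x ∈ PE(P), and an allocation y ≠ x such that x ∼_{P_i} y and x ∼_{P_j} y, then the preference profile P is not a ⊵-minimal element. -/
/-- A preference profile: each individual `i ∈ N` has a total preorder on `X`. -/
structure PrefProfile (N X : Type*) where
  pref : N → X → X → Prop
  refl : ∀ i x, pref i x x
  trans : ∀ i x y z, pref i x y → pref i y z → pref i x z
  total : ∀ i x y, pref i x y ∨ pref i y x

namespace PrefProfile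

variable {N X : Type*}

/-- Strict part of individual `i`'s preference. -/
def strict (P : PrefProfile N X) (i : N) (x y : X) : Prop :=
  P.pref i x y ∧ ¬ P.pref i y x

/-- The ranking `R(P_i, x) = 1 + #{z : z ≻_{P_i} x}`. -/
noncomputable def rank (P : PrefProfile N X) (i : N) (x : X) : ℕ :=
  1 + {z : X | P.strict i z x}.ncard

/-- The set of Pareto efficient allocations. -/
def PE (P : PrefProfile N X) : Set X :=
  {x | ¬ ∃ z : X, (∀ i, P.pref i z x) ∧ (∃ j, P.strict j z x)}

/-- `P ⊵ P'`: there is a surjection `ψ` from `PE(P')` onto `PE(P)` weakly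
improving all ranking vectors. -/
def Dom (P P' : PrefProfile N X) : Prop :=
  ∃ ψ : X → X, Set.MapsTo ψ P'.PE P.PE ∧ Set.SurjOn ψ P'.PE P.PE ∧
    ∀ x ∈ P'.PE, ∀ i, P.rank i (ψ x) ≤ P'.rank i x

/-- `P ≜ P'`. -/
def Equiv (P P' : PrefProfile N X) : Prop := Dom P P' ∧ Dom P' P

/-- `P` is ⊵-maximal. -/
def Maximal (P : PrefProfile N X) : Prop := ∀ P' : PrefProfile N X, Dom P' P → Equiv P' P

/-- `P` is a ⊵-upper bound. -/
def UpperBound (P : PrefProfile N X) : Prop := ∀ P' : PrefProfile N X, Dom P P'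

/-- `P` is ⊵-minimal. -/
def Minimal (P : PrefProfile N X) : Prop := ∀ P' : PrefProfile N X, Dom P P' → Equiv P P'

/-- `P` is a strict preference profile. -/
def StrictProfile (P : PrefProfile N X) : Prop :=
  ∀ i, ∀ x y : X, x ≠ y → P.strict i x y ∨ P.strict i y x

end PrefProfile

namespace PrefProfile

variable {N X : Type*}

lemma strict_trans_left (P : PrefProfile N X) {k : N} {a b c : X}
    (h1 : P.strict k a b) (h2 : P.pref k b c) : P.strict k a c :=
  ⟨P.trans k a b c h1.1 h2, fun h => h1.2 (P.trans k b c a h2 h)⟩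

lemma strict_trans_right (P : PrefProfile N X) {k : N} {a b c : X}
    (h1 : P.pref k a b) (h2 : P.strict k b c) : P.strict k a c :=
  ⟨P.trans k a b c h1 h2.1, fun h => h2.2 (P.trans k c a b h h1)⟩

lemma strict_or_pref (P : PrefProfile N X) (k : N) (a b : X) :
    P.strict k a b ∨ P.pref k b a := by
  by_cases h : P.pref k b a
  · exact Or.inr h
  · rcases P.total k a b with h' | h'
    · exact Or.inl ⟨h', h⟩
    · exact absurd h' h

/-- strict Pareto domination -/
def Dominates (P : PrefProfile N X) (w z : X) : Prop :=
  (∀ k, P.pref k w z) ∧ ∃ k, P.strict k w z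

lemma Dominates.trans' {P : PrefProfile N X} {u w z : X}
    (h1 : P.Dominates u w) (h2 : P.Dominates w z) : P.Dominates u z := by
  refine ⟨fun k => P.trans k u w z (h1.1 k) (h2.1 k), ?_⟩
  obtain ⟨k, hk⟩ := h1.2
  exact ⟨k, P.strict_trans_left hk (h2.1 k)⟩

lemma Dominates.irrefl {P : PrefProfile N X} {z : X} (h : P.Dominates z z) : False := by
  obtain ⟨k, hk⟩ := h.2; exact hk.2 hk.1

lemma not_mem_PE_iff {P : PrefProfile N X} {z : X} :
    z ∉ P.PE ↔ ∃ w, P.Dominates w z := by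
  simp only [PE, Set.mem_setOf_eq, not_not, Dominates]

lemma rank_le_of_pref [Fintype X] (P : PrefProfile N X) {k : N} {a b : X}
    (h : P.pref k a b) : P.rank k a ≤ P.rank k b := by
  unfold rank
  have hsub : {z : X | P.strict k z a} ⊆ {z : X | P.strict k z b} :=
    fun u hu => P.strict_trans_left hu h
  exact Nat.add_le_add_left (Set.ncard_le_ncard hsub (Set.toFinite _)) 1

/-- every non-Pareto-efficient allocation is dominated by a Pareto efficient one -/
lemma exists_pe_dominator_aux [Fintype X] (P : PrefProfile N X) :
    ∀ n (z : X), {v | P.Dominates v z}.ncard ≤ n → z ∉ P.PE →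
      ∃ w ∈ P.PE, P.Dominates w z := by
  intro n
  induction n with
  | zero =>
    intro z hcard hz
    obtain ⟨w, hw⟩ := not_mem_PE_iff.mp hz
    have : ({v | P.Dominates v z}).Nonempty := ⟨w, hw⟩
    have := (Set.ncard_pos (Set.toFinite _)).mpr this
    omega
  | succ n ih =>
    intro z hcard hz
    obtain ⟨w, hw⟩ := not_mem_PE_iff.mp hz
    by_cases hwpe : w ∈ P.PE
    · exact ⟨w, hwpe, hw⟩
    · have hss : {v | P.Dominates v w} ⊂ {v | P.Dominates v z} := by
        constructor
        · exact fun u hu => Dominates.trans' hu hw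
        · intro hsub
          exact Dominates.irrefl (hsub hw)
      have := Set.ncard_lt_ncard hss (Set.toFinite _)
      obtain ⟨u, hupe, hu⟩ := ih w (by omega) hwpe
      exact ⟨u, hupe, hu.trans' hw⟩

lemma exists_pe_dominator [Fintype X] (P : PrefProfile N X) {z : X} (hz : z ∉ P.PE) :
    ∃ w ∈ P.PE, P.Dominates w z :=
  P.exists_pe_dominator_aux ({v | P.Dominates v z}).ncard z le_rfl hz

section Tweak

variable [DecidableEq N] [DecidableEq X]

/-- The modified profile: `y` is moved to the top of its `i`-indifference class and to
the bottom of its `j`-indifference class. -/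
def tweak (P : PrefProfile N X) (i j : N) (y : X) : PrefProfile N X where
  pref k a b :=
    if k = i then (if b = y then (a = y ∨ P.strict i a y) else P.pref i a b)
    else if k = j then (if a = y then (b = y ∨ P.strict j y b) else P.pref j a b)
    else P.pref k a b
  refl := by
    intro k a
    by_cases hki : k = i
    · simp only [if_pos hki]
      by_cases ha : a = y
      · simp [ha]
      · simp [ha, P.refl]
    · simp only [if_neg hki]
      by_cases hkj : k = j
      · simp only [if_pos hkj]
        by_cases ha : a = y
        · simp [ha]
        · simp [ha, P.refl]
      · simp [if_neg hkj, P.refl]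
  trans := by
    intro k a b c h1 h2
    by_cases hki : k = i
    · simp only [if_pos hki] at h1 h2 ⊢
      by_cases hc : c = y
      · simp only [if_pos hc] at h2 ⊢
        by_cases hb : b = y
        · simp only [if_pos hb] at h1
          exact h1
        · simp only [if_neg hb] at h1
          rcases h2 with h2 | h2
          · exact absurd h2 hb
          · exact Or.inr (P.strict_trans_right h1 h2)
      · simp only [if_neg hc] at h2 ⊢
        by_cases hb : b = y
        · subst hb
          simp only [if_pos rfl] at h1
          rcases h1 with h1 | h1
          · subst h1; exact h2
          · exact P.trans _ a b c h1.1 h2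
        · simp only [if_neg hb] at h1
          exact P.trans _ a b c h1 h2
    · simp only [if_neg hki] at h1 h2 ⊢
      by_cases hkj : k = j
      · simp only [if_pos hkj] at h1 h2 ⊢
        by_cases ha : a = y
        · simp only [if_pos ha] at h1 ⊢
          rcases h1 with h1 | h1
          · subst h1
            simp only [if_pos ha] at h2
            exact h2
          · have hb : b ≠ y := fun hb => h1.2 (hb ▸ P.refl j y)
            simp only [if_neg hb] at h2
            exact Or.inr (P.strict_trans_left h1 h2)
        · simp only [if_neg ha] at h1 ⊢
          by_cases hb : b = y
          · subst hb
            simp only [if_pos rfl] at h2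
            rcases h2 with h2 | h2
            · subst h2; exact h1
            · exact (P.strict_trans_right h1 h2).1
          · simp only [if_neg hb] at h2
            exact P.trans _ a b c h1 h2
      · simp only [if_neg hkj] at h1 h2 ⊢
        exact P.trans k a b c h1 h2
  total := by
    intro k a b
    by_cases hki : k = i
    · simp only [if_pos hki]
      by_cases hb : b = y
      · rw [hb]
        by_cases ha : a = y
        · simp [ha]
        · simp only [if_pos rfl, if_neg ha]
          rcases P.strict_or_pref i a y with h | h
          · exact Or.inl (Or.inr h)
          · exact Or.inr h
      · by_cases ha : a = y
        · rw [ha]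
          simp only [if_neg hb, if_pos rfl]
          rcases P.strict_or_pref i b y with h | h
          · exact Or.inr (Or.inr h)
          · exact Or.inl h
        · simp only [if_neg hb, if_neg ha]
          exact P.total i a b
    · simp only [if_neg hki]
      by_cases hkj : k = j
      · simp only [if_pos hkj]
        by_cases ha : a = y
        · rw [ha]
          by_cases hb : b = y
          · simp [hb]
          · simp only [if_pos rfl, if_neg hb]
            rcases P.strict_or_pref j y b with h | h
            · exact Or.inl (Or.inr h)
            · exact Or.inr h
        · by_cases hb : b = y
          · rw [hb]
            simp only [if_neg ha, if_pos rfl]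
            rcases P.strict_or_pref j y a with h | h
            · exact Or.inr (Or.inr h)
            · exact Or.inl h
          · simp only [if_neg ha, if_neg hb]
            exact P.total j a b
      · simp only [if_neg hkj]
        exact P.total k a b


variable {P : PrefProfile N X} {i j : N} {x y : X}

lemma tweak_pref_def (k : N) (a b : X) : (P.tweak i j y).pref k a b =
    (if k = i then (if b = y then (a = y ∨ P.strict i a y) else P.pref i a b)
     else if k = j then (if a = y then (b = y ∨ P.strict j y b) else P.pref j a b)
     else P.pref k a b) := rfl

/-- the tweaked preference is contained in the original one -/
lemma tweak_pref_le {k : N} {a b : X} (h : (P.tweak i j y).pref k a b) :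
    P.pref k a b := by
  rw [tweak_pref_def] at h
  by_cases hki : k = i
  · rw [if_pos hki] at h
    subst hki
    by_cases hb : b = y
    · rw [if_pos hb] at h
      rw [hb]
      rcases h with h | h
      · rw [h]; exact P.refl k y
      · exact h.1
    · rwa [if_neg hb] at h
  · rw [if_neg hki] at h
    by_cases hkj : k = j
    · rw [if_pos hkj] at h
      subst hkj
      by_cases ha : a = y
      · rw [if_pos ha] at h
        rw [ha]
        rcases h with h | h
        · rw [h]; exact P.refl k y
        · exact h.1
      · rwa [if_neg ha] at h
    · rwa [if_neg hkj] at h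

/-- original strict preferences are preserved by the tweak -/
lemma tweak_strict_mono {k : N} {a b : X} (h : P.strict k a b) :
    (P.tweak i j y).strict k a b := by
  refine ⟨?_, fun hh => h.2 (tweak_pref_le hh)⟩
  rw [tweak_pref_def]
  by_cases hki : k = i
  · rw [if_pos hki]
    subst hki
    by_cases hb : b = y
    · rw [if_pos hb]
      exact Or.inr (hb ▸ h)
    · rw [if_neg hb]; exact h.1
  · rw [if_neg hki]
    by_cases hkj : k = j
    · rw [if_pos hkj]
      subst hkj
      by_cases ha : a = y
      · rw [if_pos ha]
        exact Or.inr (ha ▸ h)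
      · rw [if_neg ha]; exact h.1
    · rw [if_neg hkj]; exact h.1

lemma tweak_rank_mono [Fintype X] (k : N) (z : X) :
    P.rank k z ≤ (P.tweak i j y).rank k z := by
  unfold rank
  have hsub : {w : X | P.strict k w z} ⊆ {w : X | (P.tweak i j y).strict k w z} :=
    fun u hu => tweak_strict_mono hu
  exact Nat.add_le_add_left (Set.ncard_le_ncard hsub (Set.toFinite _)) 1

lemma tweak_rank_lt [Fintype X] (hyx : y ≠ x)
    (hindi : P.pref i x y ∧ P.pref i y x) :
    P.rank i x < (P.tweak i j y).rank i x := by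
  unfold rank
  have hsub : {w : X | P.strict i w x} ⊆ {w : X | (P.tweak i j y).strict i w x} :=
    fun u hu => tweak_strict_mono hu
  have hy_new : y ∈ {w : X | (P.tweak i j y).strict i w x} := by
    constructor
    · rw [tweak_pref_def, if_pos rfl, if_neg (Ne.symm hyx)]
      exact hindi.2
    · rw [tweak_pref_def, if_pos rfl, if_pos rfl]
      rintro (h | h)
      · exact hyx h.symm
      · exact h.2 hindi.2
  have hy_old : y ∉ {w : X | P.strict i w x} := fun h => h.2 hindi.1
  have hss : {w : X | P.strict i w x} ⊂ {w : X | (P.tweak i j y).strict i w x} :=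
    (Set.ssubset_iff_of_subset hsub).mpr ⟨y, hy_new, hy_old⟩
  exact Nat.add_lt_add_left (Set.ncard_lt_ncard hss (Set.toFinite _)) 1

/-- Pareto efficient allocations remain Pareto efficient after the tweak -/
lemma tweak_PE_mono (hij : i ≠ j) {z : X} (hz : z ∈ P.PE) :
    z ∈ (P.tweak i j y).PE := by
  rintro ⟨w, hall, k0, hst⟩
  have hallP : ∀ k, P.pref k w z := fun k => tweak_pref_le (hall k)
  have hsim : ∀ k, P.pref k z w := by
    intro k
    by_contra hk
    exact hz ⟨w, hallP, k, ⟨hallP k, hk⟩⟩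
  have hnk : ¬ (P.tweak i j y).pref k0 z w := hst.2
  rw [tweak_pref_def] at hnk
  by_cases hki : k0 = i
  · rw [if_pos hki] at hnk
    by_cases hw : w = y
    · rw [if_pos hw] at hnk
      have hzy : z ≠ y := fun h => hnk (Or.inl h)
      have hj := hall j
      rw [tweak_pref_def, if_neg (Ne.symm hij), if_pos rfl, if_pos hw] at hj
      rcases hj with hj | hj
      · exact hzy hj
      · refine hj.2 ?_
        have := hsim j
        rwa [hw] at this
    · rw [if_neg hw] at hnk
      exact hnk (hsim i)
  · rw [if_neg hki] at hnk
    by_cases hkj : k0 = j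
    · rw [if_pos hkj] at hnk
      by_cases hzy : z = y
      · rw [if_pos hzy] at hnk
        have hwy : w ≠ y := fun h => hnk (Or.inl h)
        have hi := hall i
        rw [tweak_pref_def, if_pos rfl, if_pos hzy] at hi
        rcases hi with hi | hi
        · exact hwy hi
        · refine hi.2 ?_
          have := hsim i
          rwa [hzy] at this
      · rw [if_neg hzy] at hnk
        exact hnk (hsim j)
    · rw [if_neg hkj] at hnk
      exact hnk (hsim k0)

end Tweak

end PrefProfile

/-- if two distinct individuals `i, j` are both indifferent between
a Pareto efficient allocation `x` and some `y ≠ x`, then `P` is not ⊵-minimal. -/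
theorem stmt_3 {N X : Type*} [Fintype N] [Fintype X] [Nonempty N] [Nonempty X]
    (P : PrefProfile N X) (i j : N) (hij : i ≠ j) (x y : X)
    (hx : x ∈ P.PE) (hyx : y ≠ x)
    (hindi : P.pref i x y ∧ P.pref i y x)
    (hindj : P.pref j x y ∧ P.pref j y x) :
    ¬ P.Minimal := by
  classical
  intro hmin
  set P' := P.tweak i j y with hP'
  have hPE : P.PE ⊆ P'.PE := fun z hz => PrefProfile.tweak_PE_mono hij hz
  have hrank : ∀ k z, P.rank k z ≤ P'.rank k z := fun k z =>
    PrefProfile.tweak_rank_mono k z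
  have hrankx : P.rank i x < P'.rank i x := PrefProfile.tweak_rank_lt hyx hindi
  -- P ⊵ P'
  have hDom : P.Dom P' := by
    refine ⟨fun z => if hz : z ∈ P.PE then z else
      (P.exists_pe_dominator hz).choose, ?_, ?_, ?_⟩
    · intro z hz'
      by_cases hz : z ∈ P.PE
      · simpa [dif_pos hz] using hz
      · have hspec := (P.exists_pe_dominator hz).choose_spec
        simpa [dif_neg hz] using hspec.1
    · intro w hw
      exact ⟨w, hPE hw, dif_pos hw⟩
    · intro z hz' k
      by_cases hz : z ∈ P.PE
      · simp only [dif_pos hz]; exact hrank k z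
      · simp only [dif_neg hz]
        have hspec := (P.exists_pe_dominator hz).choose_spec
        exact le_trans (P.rank_le_of_pref (hspec.2.1 k)) (hrank k z)
  -- but not P' ⊵ P
  have hnd : ¬ P'.Dom P := by
    rintro ⟨φ, hm, hs, hr⟩
    have hfin : P.PE.Finite := Set.toFinite _
    have h1 : P'.PE.ncard ≤ P.PE.ncard :=
      le_trans (Set.ncard_le_ncard hs (Set.toFinite _)) (Set.ncard_image_le hfin)
    have heq : P.PE = P'.PE := Set.eq_of_subset_of_ncard_le hPE h1 (Set.toFinite _)
    rw [← heq] at hm hs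
    have hbij := (Set.Finite.surjOn_iff_bijOn_of_mapsTo hfin hm).mp hs
    set t := hfin.toFinset with ht
    have hmemt : ∀ z, z ∈ t ↔ z ∈ P.PE := fun z => hfin.mem_toFinset
    have hsum_eq : ∑ z ∈ t, (∑ k, P'.rank k (φ z)) = ∑ z ∈ t, (∑ k, P'.rank k z) := by
      refine Finset.sum_bij (fun a _ => φ a) ?_ ?_ ?_ ?_
      · intro a ha
        exact (hmemt _).mpr (hbij.mapsTo ((hmemt _).mp ha))
      · intro a₁ ha₁ a₂ ha₂ h
        exact hbij.injOn ((hmemt _).mp ha₁) ((hmemt _).mp ha₂) h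
      · intro b hb
        obtain ⟨a, ha, hab⟩ := hbij.surjOn ((hmemt _).mp hb)
        exact ⟨a, (hmemt _).mpr ha, hab⟩
      · intro a ha
        rfl
    have hle1 : ∑ z ∈ t, (∑ k, P'.rank k (φ z)) ≤ ∑ z ∈ t, (∑ k, P.rank k z) := by
      refine Finset.sum_le_sum fun z hz => Finset.sum_le_sum fun k _ => ?_
      exact hr z ((hmemt _).mp hz) k
    have hlt : ∑ z ∈ t, (∑ k, P.rank k z) < ∑ z ∈ t, (∑ k, P'.rank k z) := by
      refine Finset.sum_lt_sum (fun z _ => Finset.sum_le_sum fun k _ => hrank k z) ?_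
      refine ⟨x, (hmemt _).mpr hx, ?_⟩
      exact Finset.sum_lt_sum (fun k _ => hrank k x) ⟨i, Finset.mem_univ i, hrankx⟩
    omega
  exact hnd (hmin P' hDom).2
end

section
/- Let P = (P_{i,i}, P_{i,-i})_{i∈N} be a lexicographic preference profile and P^ind := (P_{i,i}, P^ind_{i,-i})_{i∈N} the profile with the same private components and individualistic social components. If there exist some i ∈ N and two distinct Pareto efficient allocations x, y ∈ PE(P) such that x_i = y_i and y_{-i} ≻_{P_{i,-i}} x_{-i}, then P^ind ⊳ P, i.e., P^ind ⊵ P and not P ⊵ P^ind. -/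
/-- The set of admissible allocations: each individual gets one and only one
widget, and no widget is assigned twice. -/
abbrev Alloc (N M : Type*) := {x : N → M // Function.Injective x}

/-- `x_{-i}`: the restriction of an allocation `x` to `N \ {i}`. -/
def restr {N M : Type*} (i : N) (x : Alloc N M) : {j : N // j ≠ i} → M :=
  fun j => x.1 j.1

/-- `X_{-i}`: the set of restrictions of admissible allocations to `N \ {i}`. -/
def Xminus (N M : Type*) (i : N) : Set ({j : N // j ≠ i} → M) :=
  {f | ∃ x : Alloc N M, f = restr i x}

/-- A lexicographic preference profile: each individual `i` has a private
component `priv i`, a strict linear order on the widgets `M`, and a social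
component `soc i`, a total preorder on `X_{-i}`. -/
structure LexProfile (N M : Type*) where
  priv : N → M → M → Prop
  priv_irrefl : ∀ i x, ¬ priv i x x
  priv_trans : ∀ i x y z, priv i x y → priv i y z → priv i x z
  priv_total : ∀ i x y, x ≠ y → priv i x y ∨ priv i y x
  soc : (i : N) → ({j : N // j ≠ i} → M) → ({j : N // j ≠ i} → M) → Prop
  soc_refl : ∀ i, ∀ f ∈ Xminus N M i, soc i f f
  soc_trans : ∀ i, ∀ f ∈ Xminus N M i, ∀ g ∈ Xminus N M i, ∀ h ∈ Xminus N M i,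
    soc i f g → soc i g h → soc i f h
  soc_total : ∀ i, ∀ f ∈ Xminus N M i, ∀ g ∈ Xminus N M i, soc i f g ∨ soc i g f

namespace LexProfile

variable {N M : Type*}

/-- Strict part of the social component. -/
def sSoc (P : LexProfile N M) (i : N) (f g : {j : N // j ≠ i} → M) : Prop :=
  P.soc i f g ∧ ¬ P.soc i g f

/-- Induced strict preference on allocations: `x ≻_{P_i} y` iff
`x_i ≻_{P_{i,i}} y_i`, or `x_i = y_i` and `x_{-i} ≻_{P_{i,-i}} y_{-i}`. -/
def sPref (P : LexProfile N M) (i : N) (x y : Alloc N M) : Prop :=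
  P.priv i (x.1 i) (y.1 i) ∨ (x.1 i = y.1 i ∧ P.sSoc i (restr i x) (restr i y))

/-- Induced weak preference on allocations. -/
def wPref (P : LexProfile N M) (i : N) (x y : Alloc N M) : Prop :=
  P.priv i (x.1 i) (y.1 i) ∨ (x.1 i = y.1 i ∧ P.soc i (restr i x) (restr i y))

/-- The ranking `R(P_i, x) = 1 + #{z ∈ X : z ≻_{P_i} x}`. -/
noncomputable def rank (P : LexProfile N M) (i : N) (x : Alloc N M) : ℕ :=
  1 + {z : Alloc N M | P.sPref i z x}.ncard

/-- The set of Pareto efficient allocations. -/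
def PE (P : LexProfile N M) : Set (Alloc N M) :=
  {x | ¬ ∃ z : Alloc N M, (∀ i, P.wPref i z x) ∧ (∃ j, P.sPref j z x)}

/-- `P ⊵ P'`: there is a surjection `ψ` from `PE(P')` onto `PE(P)` weakly
improving all ranking vectors. -/
def Dom (P P' : LexProfile N M) : Prop :=
  ∃ ψ : Alloc N M → Alloc N M, Set.MapsTo ψ P'.PE P.PE ∧ Set.SurjOn ψ P'.PE P.PE ∧
    ∀ x ∈ P'.PE, ∀ i, P.rank i (ψ x) ≤ P'.rank i x

/-- `P^ind`: the profile with the same private components as `P` and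
individualistic social components (complete indifference over others' widgets). -/
def ind (P : LexProfile N M) : LexProfile N M where
  priv := P.priv
  priv_irrefl := P.priv_irrefl
  priv_trans := P.priv_trans
  priv_total := P.priv_total
  soc := fun _ _ _ => True
  soc_refl := by intros; trivial
  soc_trans := by intros; trivial
  soc_total := by intros; left; trivial

end LexProfile

namespace LexProfile

variable {N M : Type*} [Fintype N] [Fintype M] (P : LexProfile N M)

lemma restr_mem_Xminus (i : N) (x : Alloc N M) : restr i x ∈ Xminus N M i := ⟨x, rfl⟩

lemma sSoc_irrefl (i : N) (x : Alloc N M) : ¬ P.sSoc i (restr i x) (restr i x) :=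
  fun h => h.2 (P.soc_refl i _ ⟨x, rfl⟩)

lemma sPref_irrefl (i : N) (x : Alloc N M) : ¬ P.sPref i x x := by
  rintro (h | ⟨_, h⟩)
  · exact P.priv_irrefl i _ h
  · exact P.sSoc_irrefl i x h

lemma sPref_trans {i : N} {x y z : Alloc N M} (h1 : P.sPref i x y) (h2 : P.sPref i y z) :
    P.sPref i x z := by
  rcases h1 with h1 | ⟨e1, s1⟩ <;> rcases h2 with h2 | ⟨e2, s2⟩
  · exact Or.inl (P.priv_trans i _ _ _ h1 h2)
  · exact Or.inl (e2 ▸ h1)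
  · exact Or.inl (e1 ▸ h2)
  · obtain ⟨a, b⟩ := s1
    obtain ⟨c, d⟩ := s2
    refine Or.inr ⟨e1.trans e2, ?_, fun hzx => b ?_⟩
    · exact P.soc_trans i _ (restr_mem_Xminus i x) _ (restr_mem_Xminus i y) _
        (restr_mem_Xminus i z) a c
    · exact P.soc_trans i _ (restr_mem_Xminus i y) _ (restr_mem_Xminus i z) _
        (restr_mem_Xminus i x) c hzx

lemma ind_sPref_iff (i : N) (z x : Alloc N M) :
    P.ind.sPref i z x ↔ P.priv i (z.1 i) (x.1 i) := by
  simp [sPref, sSoc, ind]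

lemma ind_wPref_iff (i : N) (z x : Alloc N M) :
    P.ind.wPref i z x ↔ P.priv i (z.1 i) (x.1 i) ∨ z.1 i = x.1 i := by
  simp [wPref, ind]

lemma ind_wPref_refl (i : N) (x : Alloc N M) : P.ind.wPref i x x :=
  (P.ind_wPref_iff i x x).mpr (Or.inr rfl)

lemma ind_wPref_trans {i : N} {x y z : Alloc N M} (h1 : P.ind.wPref i x y)
    (h2 : P.ind.wPref i y z) : P.ind.wPref i x z := by
  rw [ind_wPref_iff] at *
  rcases h1 with h1 | h1 <;> rcases h2 with h2 | h2
  · exact Or.inl (P.priv_trans i _ _ _ h1 h2)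
  · exact Or.inl (h2 ▸ h1)
  · exact Or.inl (h1 ▸ h2)
  · exact Or.inr (h1.trans h2)

lemma wPref_to_ind {i : N} {z x : Alloc N M} (h : P.wPref i z x) : P.ind.wPref i z x := by
  rw [ind_wPref_iff]
  rcases h with h | ⟨h, _⟩
  · exact Or.inl h
  · exact Or.inr h

lemma PE_ind_subset : P.ind.PE ⊆ P.PE := by
  intro x hx
  rintro ⟨z, hw, j, hs⟩
  by_cases hpriv : ∃ k, P.priv k (z.1 k) (x.1 k)
  · obtain ⟨k, hk⟩ := hpriv
    exact hx ⟨z, fun m => P.wPref_to_ind (hw m), ⟨k, (P.ind_sPref_iff k z x).mpr hk⟩⟩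
  · push_neg at hpriv
    have hz : z = x := Subtype.ext (funext fun k => by
      rcases hw k with h | ⟨h, _⟩
      · exact absurd h (hpriv k)
      · exact h)
    subst hz
    exact P.sPref_irrefl j z hs

lemma rank_ind_le_rank (i : N) (x : Alloc N M) : P.ind.rank i x ≤ P.rank i x := by
  unfold rank
  have hs : {z : Alloc N M | P.ind.sPref i z x} ⊆ {z : Alloc N M | P.sPref i z x} := by
    intro z hz
    exact Or.inl ((P.ind_sPref_iff i z x).mp hz)
  exact Nat.add_le_add_left (Set.ncard_le_ncard hs (Set.toFinite _)) 1

lemma ind_rank_mono {i : N} {u x : Alloc N M} (h : P.ind.wPref i u x) :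
    P.ind.rank i u ≤ P.ind.rank i x := by
  unfold rank
  have hs : {z : Alloc N M | P.ind.sPref i z u} ⊆ {z : Alloc N M | P.ind.sPref i z x} := by
    intro z hz
    simp only [Set.mem_setOf_eq] at hz ⊢
    rw [ind_sPref_iff] at hz ⊢
    rw [ind_wPref_iff] at h
    rcases h with h | h
    · exact P.priv_trans i _ _ _ hz h
    · exact h ▸ hz
  exact Nat.add_le_add_left (Set.ncard_le_ncard hs (Set.toFinite _)) 1

lemma ind_rank_congr {i : N} {u x : Alloc N M} (h : u.1 i = x.1 i) :
    P.ind.rank i u = P.ind.rank i x := by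
  unfold rank
  congr 1
  apply congrArg
  ext z
  rw [Set.mem_setOf_eq, Set.mem_setOf_eq, ind_sPref_iff, ind_sPref_iff, h]

lemma rank_lt_of_sPref {i : N} {x y : Alloc N M} (h : P.sPref i y x) :
    P.rank i y < P.rank i x := by
  unfold rank
  have hss : {z : Alloc N M | P.sPref i z y} ⊂ {z : Alloc N M | P.sPref i z x} := by
    constructor
    · exact fun z hz => P.sPref_trans hz h
    · intro hsub
      exact P.sPref_irrefl i y (hsub h)
  exact Nat.add_lt_add_left (Set.ncard_lt_ncard hss (Set.toFinite _)) 1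

lemma exists_ind_PE_improvement (x : Alloc N M) :
    ∃ u, u ∈ P.ind.PE ∧ ∀ k, P.ind.wPref k u x := by
  set D : Alloc N M → Set (Alloc N M) :=
    fun w => {z | (∀ k, P.ind.wPref k z w) ∧ ∃ j, P.ind.sPref j z w} with hD
  suffices H : ∀ n, ∀ x : Alloc N M, (D x).ncard ≤ n →
      ∃ u, u ∈ P.ind.PE ∧ ∀ k, P.ind.wPref k u x from H _ x le_rfl
  intro n
  induction n using Nat.strong_induction_on with
  | _ n ih =>
    intro x hxn
    by_cases hx : x ∈ P.ind.PE
    · exact ⟨x, hx, fun k => P.ind_wPref_refl k x⟩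
    · have hex : ∃ z : Alloc N M, (∀ k, P.ind.wPref k z x) ∧ ∃ j, P.ind.sPref j z x := by
        by_contra hc
        exact hx hc
      obtain ⟨z, hzw, hzs⟩ := hex
      have hzmem : z ∈ D x := ⟨hzw, hzs⟩
      have hss : D z ⊂ D x := by
        constructor
        · rintro w ⟨hww, j, hws⟩
          refine ⟨fun k => P.ind_wPref_trans (hww k) (hzw k), j, ?_⟩
          rw [ind_sPref_iff] at hws ⊢
          rcases (P.ind_wPref_iff j z x).mp (hzw j) with h | h
          · exact P.priv_trans j _ _ _ hws h
          · exact h ▸ hws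
        · intro hsub
          obtain ⟨_, j, hj⟩ := hsub hzmem
          exact P.priv_irrefl j _ ((P.ind_sPref_iff j z z).mp hj)
      have hlt : (D z).ncard < (D x).ncard := Set.ncard_lt_ncard hss (Set.toFinite _)
      obtain ⟨u, huPE, huw⟩ := ih (D z).ncard (lt_of_lt_of_le hlt hxn) z le_rfl
      exact ⟨u, huPE, fun k => P.ind_wPref_trans (huw k) (hzw k)⟩

end LexProfile

/-- if some individual `i` and two distinct Pareto efficient
allocations `x, y ∈ PE(P)` satisfy `x_i = y_i` and `y_{-i} ≻_{P_{i,-i}} x_{-i}`,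
then `P^ind ⊳ P`. -/
theorem stmt_15 {N M : Type*} [Fintype N] [Fintype M]
    (hNM : Fintype.card N ≤ Fintype.card M) (P : LexProfile N M)
    (i : N) (x y : Alloc N M) (hxy : x ≠ y)
    (hxPE : x ∈ P.PE) (hyPE : y ∈ P.PE)
    (heq : x.1 i = y.1 i) (hsoc : P.sSoc i (restr i y) (restr i x)) :
    P.ind.Dom P ∧ ¬ P.Dom P.ind := by
  classical
  constructor
  · -- `P.ind ⊵ P`
    choose φ hφPE hφw using P.exists_ind_PE_improvement
    refine ⟨fun w => if w ∈ P.ind.PE then w else φ w, ?_, ?_, ?_⟩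
    · intro w _
      by_cases h : w ∈ P.ind.PE
      · simpa [h] using h
      · simpa [h] using hφPE w
    · intro v hv
      exact ⟨v, P.PE_ind_subset hv, by simp [hv]⟩
    · intro w _ k
      by_cases h : w ∈ P.ind.PE
      · simpa [h] using P.rank_ind_le_rank k w
      · simp only [if_neg h]
        exact le_trans (P.ind_rank_mono (hφw w k)) (P.rank_ind_le_rank k w)
  · -- `¬ (P ⊵ P.ind)`
    rintro ⟨ψ, hmaps, hsurj, hrank⟩
    have hsub : P.ind.PE ⊆ P.PE := P.PE_ind_subset
    have hfin : P.PE.Finite := Set.toFinite _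
    have hfin' : P.ind.PE.Finite := Set.toFinite _
    have hcard1 : P.PE.ncard ≤ P.ind.PE.ncard := by
      calc P.PE.ncard ≤ (ψ '' P.ind.PE).ncard :=
            Set.ncard_le_ncard hsurj (hfin'.image ψ)
        _ ≤ P.ind.PE.ncard := Set.ncard_image_le hfin'
    have hEq : P.ind.PE = P.PE := Set.eq_of_subset_of_ncard_le hsub hcard1 hfin
    rw [hEq] at hmaps hsurj hrank
    have hbij : Set.BijOn ψ P.PE P.PE :=
      (hfin.surjOn_iff_bijOn_of_mapsTo hmaps).mp hsurj
    set T : Finset (Alloc N M) := hfin.toFinset with hT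
    have hmemT : ∀ w : Alloc N M, w ∈ T ↔ w ∈ P.PE := fun w => hfin.mem_toFinset
    have hsumeq : ∑ w ∈ T, P.rank i (ψ w) = ∑ v ∈ T, P.rank i v := by
      refine Finset.sum_bij (fun w _ => ψ w) ?_ ?_ ?_ ?_
      · intro a ha
        exact (hmemT _).mpr (hbij.mapsTo ((hmemT a).mp ha))
      · intro a ha b hb hab
        exact hbij.injOn ((hmemT a).mp ha) ((hmemT b).mp hb) hab
      · intro b hb
        obtain ⟨a, ha, rfl⟩ := hbij.surjOn ((hmemT b).mp hb)
        exact ⟨a, (hmemT a).mpr ha, rfl⟩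
      · intro a _
        rfl
    have h1 : ∀ w ∈ T, P.rank i (ψ w) ≤ P.ind.rank i w := fun w hw =>
      hrank w ((hmemT w).mp hw) i
    have h2 : ∀ w ∈ T, P.ind.rank i w ≤ P.rank i w := fun w _ =>
      P.rank_ind_le_rank i w
    have hxT : x ∈ T := (hmemT x).mpr hxPE
    have hxeq : P.ind.rank i x = P.rank i x := by
      by_contra hne
      have hlt : P.ind.rank i x < P.rank i x :=
        lt_of_le_of_ne (P.rank_ind_le_rank i x) hne
      have hstrict : ∑ w ∈ T, P.ind.rank i w < ∑ w ∈ T, P.rank i w :=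
        Finset.sum_lt_sum h2 ⟨x, hxT, hlt⟩
      have hge : ∑ w ∈ T, P.rank i w ≤ ∑ w ∈ T, P.ind.rank i w := by
        calc ∑ w ∈ T, P.rank i w = ∑ w ∈ T, P.rank i (ψ w) := hsumeq.symm
          _ ≤ ∑ w ∈ T, P.ind.rank i w := Finset.sum_le_sum h1
      omega
    have hyx : P.sPref i y x := Or.inr ⟨heq.symm, hsoc⟩
    have hlt : P.rank i y < P.rank i x := P.rank_lt_of_sPref hyx
    have hchain : P.rank i x ≤ P.rank i y := by
      calc P.rank i x = P.ind.rank i x := hxeq.symm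
        _ = P.ind.rank i y := P.ind_rank_congr heq
        _ ≤ P.rank i y := P.rank_ind_le_rank i y
    omega
end
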